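/- Let n ≥ 1 and let V be the ℂ-vector space of smooth 2π-periodic maps ℝ → Matrix n n ℂ. There is no ℂ-linear functional λ : V → ℂ such that c(ε₁, ε₂) = λ(⁅ε₁, ε₂⁆) for all ε₁, ε₂ ∈ V. (Nontriviality of the 2-cocycle c: it is not a coboundary, so the momentum mapping exists only for the central extension of the gauge algebra and not for the gauge algebra itself.) -/
import Mathlib


open MeasureTheory

attribute [local instance] Matrix.linftyOpNormedAddCommGroup Matrix.linftyOpNormedRing
  Matrix.linftyOpNormedAlgebra

/-- The boundary 2-cocycle `c(ε₁, ε₂) = ∫_{∂Σ} tr(ε₁ dε₂)` on smooth `2π`-periodic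
`gl(n,ℂ)`-valued maps on `ℝ` (loops in the gauge algebra):
`c(ε₁, ε₂) = ∫₀^{2π} tr(ε₁(t)·ε₂′(t)) dt`. -/
noncomputable def cocycle {n : ℕ} (ε₁ ε₂ : ℝ → Matrix (Fin n) (Fin n) ℂ) : ℂ :=
  ∫ t in (0 : ℝ)..(2 * Real.pi), (ε₁ t * deriv ε₂ t).trace

/-- The pointwise bracket `⁅ε₁, ε₂⁆(t) = ε₁(t)·ε₂(t) − ε₂(t)·ε₁(t)`. -/
noncomputable def bracket {n : ℕ} (ε₁ ε₂ : ℝ → Matrix (Fin n) (Fin n) ℂ) :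
    ℝ → Matrix (Fin n) (Fin n) ℂ :=
  fun t => ε₁ t * ε₂ t - ε₂ t * ε₁ t

/-- The `ℂ`-vector space `V` of smooth `2π`-periodic maps `ℝ → gl(n,ℂ)`, as a
submodule of the space of all maps `ℝ → Matrix (Fin n) (Fin n) ℂ`. -/
noncomputable def V (n : ℕ) : Submodule ℂ (ℝ → Matrix (Fin n) (Fin n) ℂ) where
  carrier := {ε | ContDiff ℝ (⊤ : ℕ∞) ε ∧ Function.Periodic ε (2 * Real.pi)}
  add_mem' := fun hf hg => ⟨hf.1.add hg.1, hf.2.add hg.2⟩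
  zero_mem' := ⟨contDiff_const, fun _ => rfl⟩
  smul_mem' := fun a f hf =>
    ⟨hf.1.const_smul a, fun x => by simp only [Pi.smul_apply, hf.2 x]⟩

/-- The bracket of two smooth `2π`-periodic maps is smooth and `2π`-periodic. -/
theorem bracket_mem {n : ℕ} {ε₁ ε₂ : ℝ → Matrix (Fin n) (Fin n) ℂ}
    (h₁ : ε₁ ∈ V n) (h₂ : ε₂ ∈ V n) : bracket ε₁ ε₂ ∈ V n :=
  ⟨(h₁.1.mul h₂.1).sub (h₂.1.mul h₁.1),
    fun x => by simp only [bracket, h₁.2 x, h₂.2 x]⟩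

/-- Nontriviality of the boundary 2-cocycle `c`: there is no `ℂ`-linear functional
`λ : V → ℂ` on the space `V` of smooth `2π`-periodic maps `ℝ → gl(n,ℂ)` such that
`c(ε₁, ε₂) = λ(⁅ε₁, ε₂⁆)` for all `ε₁, ε₂ ∈ V`; i.e. `c` is not a coboundary. -/
theorem cocycle_not_coboundary (n : ℕ) (hn : 1 ≤ n) :
    ¬ ∃ lam : V n →ₗ[ℂ] ℂ, ∀ ε₁ ε₂ : V n,
      cocycle (ε₁ : ℝ → Matrix (Fin n) (Fin n) ℂ) (ε₂ : ℝ → Matrix (Fin n) (Fin n) ℂ)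
        = lam ⟨bracket ε₁ ε₂, bracket_mem ε₁.2 ε₂.2⟩ := by
  rintro ⟨lam, hlam⟩
  set f : ℝ → Matrix (Fin n) (Fin n) ℂ :=
    fun t => (Real.cos t : ℂ) • (1 : Matrix (Fin n) (Fin n) ℂ) with hfdef
  set g : ℝ → Matrix (Fin n) (Fin n) ℂ :=
    fun t => (Real.sin t : ℂ) • (1 : Matrix (Fin n) (Fin n) ℂ) with hgdef
  have hfeq : f = fun t => Real.cos t • (1 : Matrix (Fin n) (Fin n) ℂ) := by
    funext t; rw [hfdef]; exact Complex.coe_smul _ _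
  have hgeq : g = fun t => Real.sin t • (1 : Matrix (Fin n) (Fin n) ℂ) := by
    funext t; rw [hgdef]; exact Complex.coe_smul _ _
  have hf : f ∈ V n := by
    refine ⟨hfeq ▸ Real.contDiff_cos.smul contDiff_const, fun x => ?_⟩
    simp only [hfdef, Real.cos_periodic x]
  have hg : g ∈ V n := by
    refine ⟨hgeq ▸ Real.contDiff_sin.smul contDiff_const, fun x => ?_⟩
    simp only [hgdef, Real.sin_periodic x]
  have hb : bracket f g = 0 := by
    funext t
    simp only [bracket, hfdef, hgdef, Pi.zero_apply, Matrix.smul_mul, Matrix.mul_smul,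
      smul_smul]
    rw [mul_comm, sub_self]
  have h0 : lam ⟨bracket f g, bracket_mem hf hg⟩ = 0 := by
    have : (⟨bracket f g, bracket_mem hf hg⟩ : V n) = 0 := Subtype.ext hb
    rw [this, map_zero]
  have hderiv : ∀ t, deriv g t = (Real.cos t : ℂ) • (1 : Matrix (Fin n) (Fin n) ℂ) := by
    intro t
    exact (((Real.hasDerivAt_sin t).ofReal_comp).smul_const
      (1 : Matrix (Fin n) (Fin n) ℂ)).deriv
  have hc : cocycle f g = ((Real.pi * n : ℝ) : ℂ) := by
    unfold cocycle
    have h1 : ∀ t : ℝ, (f t * deriv g t).trace = ((Real.cos t ^ 2 * n : ℝ) : ℂ) := by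
      intro t
      rw [hderiv t]
      simp only [hfdef, Matrix.smul_mul, Matrix.mul_smul, smul_smul, Matrix.trace_smul,
        Matrix.trace_one, smul_eq_mul]
      push_cast
      rw [one_mul, Matrix.trace_one, Fintype.card_fin]
      ring
    rw [intervalIntegral.integral_congr (fun t _ => h1 t)]
    rw [intervalIntegral.integral_ofReal]
    norm_cast
    rw [intervalIntegral.integral_mul_const, integral_cos_sq]
    simp [Real.sin_two_pi, Real.cos_two_pi]
  have := hlam ⟨f, hf⟩ ⟨g, hg⟩
  rw [h0] at this
  rw [hc] at this
  have hpi : (Real.pi * n : ℝ) ≠ 0 := by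
    positivity
  exact hpi (by exact_mod_cast this)
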